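/- arXiv:1511.09180 — 4 statements merged into one kernel-verified Lean document; each statement's English description precedes it below -/
import Mathlib

section
/- Let ν, δ, β be positive reals with ν ≤ δ, let μ̄ > 0 and σ_μ² ≥ 0, set μₓ = μ̄ + σ_μ²/μ̄ and α = 1 - 2νμ̄ + (δ² + β²)(μ̄² + σ_μ²). If μₓ < 2ν/(δ² + β²), then 0 ≤ α < 1. -/
theorem stmt4 (ν δ β μbar σμ2 : ℝ) (hν : 0 < ν) (hδ : 0 < δ) (hβ : 0 < β)
    (hνδ : ν ≤ δ) (hμ : 0 < μbar) (hσ : 0 ≤ σμ2)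
    (hcond : μbar + σμ2 / μbar < 2 * ν / (δ ^ 2 + β ^ 2)) :
    0 ≤ 1 - 2 * ν * μbar + (δ ^ 2 + β ^ 2) * (μbar ^ 2 + σμ2) ∧
    1 - 2 * ν * μbar + (δ ^ 2 + β ^ 2) * (μbar ^ 2 + σμ2) < 1 := by
  have hs : 0 < δ ^ 2 + β ^ 2 := by positivity
  have h1 : (δ ^ 2 + β ^ 2) * (μbar + σμ2 / μbar) < 2 * ν := by
    rw [lt_div_iff₀ hs] at hcond; linarith [hcond]
  have h2 : (μbar + σμ2 / μbar) * μbar = μbar ^ 2 + σμ2 := by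
    field_simp
  constructor
  · nlinarith [sq_nonneg (1 - ν * μbar), sq_nonneg β, sq_nonneg μbar,
      mul_nonneg (mul_nonneg (sub_nonneg.mpr hνδ) (by linarith : (0:ℝ) ≤ δ + ν)) (sq_nonneg μbar),
      mul_nonneg hσ hs.le]
  · nlinarith [mul_pos hμ hμ]
end

section
/- Let p_c ∈ ℝ^{N²} satisfy (Ā⊗Ā + C_A)p_c = p_c and 𝟙ᵀp_c = 1, where Ā is left-stochastic and Ā⊗Ā + C_A is left-stochastic and primitive with p_c entrywise nonnegative. Partition p_c into N column subvectors p₁,…,p_N of length N and form P_c = [p₁ … p_N]. If C_A = E[(A-Ā)⊗(A-Ā)] for a random left-stochastic A with E[A]=Ā, then the row sums of P_c give the Perron eigenvector p̄ of Ā: P_c𝟙 = p̄ with Āp̄ = p̄. -/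
open MeasureTheory Matrix Kronecker

theorem stmt13 {N : ℕ} {Ω : Type*} [MeasurableSpace Ω] (P : Measure Ω)
    [IsProbabilityMeasure P] (A : Ω → Matrix (Fin N) (Fin N) ℝ)
    (Abar : Matrix (Fin N) (Fin N) ℝ)
    (CA : Matrix (Fin N × Fin N) (Fin N × Fin N) ℝ)
    (hmeas : ∀ i j, Measurable fun ω => A ω i j)
    (hstoch : ∀ᵐ ω ∂P, (∀ i j, 0 ≤ A ω i j) ∧ ∀ k, ∑ l, A ω l k = 1)
    (hAbar : Abar = Matrix.of fun i j => ∫ ω, A ω i j ∂P)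
    (hCA : CA = Matrix.of fun pq rs => ∫ ω, ((A ω - Abar) ⊗ₖ (A ω - Abar)) pq rs ∂P)
    (hAbarcol : ∀ k, ∑ l, Abar l k = 1)
    (hKcol : ∀ k, ∑ l, (Abar ⊗ₖ Abar + CA) l k = 1)
    (hprim : ∃ n : ℕ, ∀ i j, 0 < ((Abar ⊗ₖ Abar + CA) ^ n) i j)
    (pc : Fin N × Fin N → ℝ)
    (hpc : (Abar ⊗ₖ Abar + CA).mulVec pc = pc)
    (hpcsum : ∑ kl : Fin N × Fin N, pc kl = 1) (hpcnn : ∀ kl, 0 ≤ pc kl) :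
    Abar.mulVec (fun l => ∑ k, pc (k, l)) = (fun l => ∑ k, pc (k, l)) ∧
    ∑ l, ∑ k, pc (k, l) = 1 := by
  have hbound : ∀ i j, ∀ᵐ ω ∂P, |A ω i j| ≤ 1 := by
    intro i j
    filter_upwards [hstoch] with ω hω
    obtain ⟨hnn, hcol⟩ := hω
    rw [abs_of_nonneg (hnn i j)]
    calc A ω i j ≤ ∑ l, A ω l j :=
          Finset.single_le_sum (fun l _ => hnn l j) (Finset.mem_univ i)
      _ = 1 := hcol j
  have hint2 : ∀ i j k l,
      Integrable (fun ω => (A ω i j - Abar i j) * (A ω k l - Abar k l)) P := by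
    intro i j k l
    refine (integrable_const ((1 + |Abar i j|) * (1 + |Abar k l|))).mono'
      (((hmeas i j).sub measurable_const).mul
        ((hmeas k l).sub measurable_const)).aestronglyMeasurable ?_
    filter_upwards [hbound i j, hbound k l] with ω h1 h2
    rw [Real.norm_eq_abs, abs_mul]
    have e1 : |A ω i j - Abar i j| ≤ 1 + |Abar i j| :=
      (abs_sub _ _).trans (by linarith)
    have e2 : |A ω k l - Abar k l| ≤ 1 + |Abar k l| :=
      (abs_sub _ _).trans (by linarith)
    exact mul_le_mul e1 e2 (abs_nonneg _) (by positivity)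
  have hCAsum : ∀ (l r s : Fin N), ∑ k, CA (k, l) (r, s) = 0 := by
    intro l r s
    have hCAe : ∀ k, CA (k, l) (r, s)
        = ∫ ω, (A ω k r - Abar k r) * (A ω l s - Abar l s) ∂P := by
      intro k
      rw [hCA]
      simp [Matrix.kroneckerMap_apply, Matrix.sub_apply]
    calc ∑ k, CA (k, l) (r, s)
        = ∑ k, ∫ ω, (A ω k r - Abar k r) * (A ω l s - Abar l s) ∂P := by
          simp_rw [hCAe]
      _ = ∫ ω, ∑ k, (A ω k r - Abar k r) * (A ω l s - Abar l s) ∂P :=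
          (integral_finset_sum _ (fun k _ => hint2 k r l s)).symm
      _ = 0 := by
          rw [integral_eq_zero_of_ae]
          filter_upwards [hstoch] with ω hω
          obtain ⟨hnn, hcol⟩ := hω
          rw [← Finset.sum_mul]
          have : ∑ k, (A ω k r - Abar k r) = 0 := by
            rw [Finset.sum_sub_distrib, hcol r, hAbarcol r]; ring
          rw [this, zero_mul]; rfl
  have hMsum : ∀ (l r s : Fin N),
      ∑ k, (Abar ⊗ₖ Abar + CA) (k, l) (r, s) = Abar l s := by
    intro l r s
    simp only [Matrix.add_apply, Finset.sum_add_distrib, hCAsum l r s, add_zero,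
      Matrix.kroneckerMap_apply]
    rw [← Finset.sum_mul, hAbarcol r, one_mul]
  constructor
  · funext l
    have h1 : ∑ k, pc (k, l) = ∑ k, ((Abar ⊗ₖ Abar + CA).mulVec pc) (k, l) := by
      rw [hpc]
    calc Abar.mulVec (fun l => ∑ k, pc (k, l)) l
        = ∑ s, Abar l s * ∑ r, pc (r, s) := rfl
      _ = ∑ s, ∑ r, Abar l s * pc (r, s) := by
          simp_rw [Finset.mul_sum]
      _ = ∑ rs : Fin N × Fin N, Abar l rs.2 * pc rs := by
          rw [Fintype.sum_prod_type]; exact Finset.sum_comm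
      _ = ∑ rs : Fin N × Fin N, (∑ k, (Abar ⊗ₖ Abar + CA) (k, l) rs) * pc rs := by
          refine Finset.sum_congr rfl fun rs _ => ?_
          rw [hMsum l rs.1 rs.2]
      _ = ∑ k, ∑ rs : Fin N × Fin N, (Abar ⊗ₖ Abar + CA) (k, l) rs * pc rs := by
          rw [Finset.sum_comm]
          simp_rw [Finset.sum_mul]
      _ = ∑ k, ((Abar ⊗ₖ Abar + CA).mulVec pc) (k, l) := rfl
      _ = ∑ k, pc (k, l) := h1.symm
  · calc ∑ l, ∑ k, pc (k, l) = ∑ k, ∑ l, pc (k, l) := Finset.sum_comm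
      _ = ∑ kl : Fin N × Fin N, pc kl := (Fintype.sum_prod_type _).symm
      _ = 1 := hpcsum
end

section
/- Let A be an N×N left-stochastic matrix, R a symmetric positive-definite M×M matrix with eigenvalues in (0, λ_max], and μ > 0 with 2μλ_max(R) < 2 (i.e., μλ_max(R) < 1 suffices for |1-2μλ(R)|<1 under 0<μλ(R)<1). If every eigenvalue λ of R satisfies |1 - 2μλ| < 1, then the spectral radius of B = Aᵀ ⊗ (I_M - 2μR) is strictly less than 1. -/
open Matrix Kronecker

/-!
Diagonalising `R = U D U*` makes `Aᵀ ⊗ (1 - 2μR)` unitarily similar to `Aᵀ ⊗ diag c` with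
`c k = 1 - 2μ λₖ`. An eigenvector `v` of the latter for `z` satisfies
`c k • Aᵀ v(·, k) = z • v(·, k)` for every `k`; choosing `k` with `v(·, k) ≠ 0` and using that
eigenvalues of the row-stochastic matrix `Aᵀ` have modulus at most `1` (compare at a coordinate
of maximal modulus) gives `‖z‖ ≤ ‖c k‖ < 1`.
-/

namespace Matrix

variable {ι κ : Type*} [Fintype ι] [Fintype κ] [DecidableEq κ]

theorem kronecker_diagonal_mulVec_apply {R : Type*} [CommSemiring R] (A : Matrix ι ι R)
    (d : κ → R) (v : ι × κ → R) (i : ι) (k : κ) :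
    (A ⊗ₖ diagonal d *ᵥ v) (i, k) = d k * (A *ᵥ fun j => v (j, k)) i := by
  simp [mulVec, dotProduct, Fintype.sum_prod_type, diagonal_apply, Finset.mul_sum, mul_left_comm,
    mul_assoc]

variable [DecidableEq ι]

theorem exists_mulVec_eq_smul_of_mem_spectrum {K : Type*} [Field K] {X : Matrix ι ι K} {z : K}
    (hz : z ∈ spectrum K X) : ∃ v ≠ 0, X *ᵥ v = z • v := by
  rw [← spectrum_toLin', ← Module.End.hasEigenvalue_iff_mem_spectrum] at hz
  obtain ⟨v, hv⟩ := hz.exists_hasEigenvector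
  exact ⟨v, hv.2, by simpa using hv.apply_eq_smul⟩

theorem norm_le_one_of_mulVec_eq_smul {P : Matrix ι ι ℝ} (hP : P ∈ rowStochastic ℝ ι)
    {w : ι → ℂ} (hw : w ≠ 0) {ζ : ℂ} (h : P.map Complex.ofReal *ᵥ w = ζ • w) : ‖ζ‖ ≤ 1 := by
  obtain ⟨j, hj⟩ := Function.ne_iff.mp hw
  have : Nonempty ι := ⟨j⟩
  obtain ⟨i, hi⟩ : ∃ i, ∀ j, ‖w j‖ ≤ ‖w i‖ := Finite.exists_max fun j => ‖w j‖
  have hwi : 0 < ‖w i‖ := (norm_pos_iff.mpr hj).trans_le (hi j)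
  refine le_of_mul_le_mul_right ?_ hwi
  calc ‖ζ‖ * ‖w i‖ = ‖∑ j, (P i j : ℂ) * w j‖ := by
        rw [← norm_mul, ← smul_eq_mul, ← Pi.smul_apply, ← h]; rfl
    _ ≤ ∑ j, P i j * ‖w j‖ := (norm_sum_le _ _).trans_eq <| by
        simp [Complex.norm_real, abs_of_nonneg (hP.1 i _)]
    _ ≤ ∑ j, P i j * ‖w i‖ := by gcongr with j; exacts [hP.1 i j, hi j]
    _ = 1 * ‖w i‖ := by rw [← Finset.sum_mul, sum_row_of_mem_rowStochastic hP]

theorem exists_norm_le_of_mem_spectrum_kronecker_diagonal {P : Matrix ι ι ℝ}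
    (hP : P ∈ rowStochastic ℝ ι) (d : κ → ℂ) {z : ℂ}
    (hz : z ∈ spectrum ℂ (P.map Complex.ofReal ⊗ₖ diagonal d)) : ∃ k, ‖z‖ ≤ ‖d k‖ := by
  obtain ⟨v, hv, hvz⟩ := exists_mulVec_eq_smul_of_mem_spectrum hz
  obtain ⟨⟨i, k⟩, hik⟩ := Function.ne_iff.mp hv
  set w : ι → ℂ := fun j => v (j, k)
  have hw : w ≠ 0 := Function.ne_iff.mpr ⟨i, hik⟩
  have hblock : d k • (P.map Complex.ofReal *ᵥ w) = z • w := funext fun j => by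
    simpa [kronecker_diagonal_mulVec_apply] using congrFun hvz (j, k)
  refine ⟨k, ?_⟩
  by_cases hdk : d k = 0
  · have hz0 : z = 0 := by simpa [hdk, hw, eq_comm] using hblock
    simp [hz0]
  · have := norm_le_one_of_mulVec_eq_smul hP hw (ζ := z / d k) <| by
      rw [div_eq_inv_mul, mul_smul, ← hblock, smul_smul, inv_mul_cancel₀ hdk, one_smul]
    rwa [norm_div, div_le_one (norm_pos_iff.mpr hdk)] at this

theorem spectrum_kronecker_conjStarAlgAut {R : Type*} [CommRing R] [StarRing R]
    (A : Matrix ι ι R) (U : unitary (Matrix κ κ R)) (X : Matrix κ κ R) :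
    spectrum R (A ⊗ₖ Unitary.conjStarAlgAut R _ U X) = spectrum R (A ⊗ₖ X) := by
  let V : unitary (Matrix (ι × κ) (ι × κ) R) :=
    ⟨1 ⊗ₖ (U : Matrix κ κ R), kronecker_mem_unitary (one_mem _) U.2⟩
  have hconj : A ⊗ₖ Unitary.conjStarAlgAut R _ U X = Unitary.conjStarAlgAut R _ V (A ⊗ₖ X) := by
    simp [V, ← mul_kronecker_mul, star_eq_conjTranspose, conjTranspose_kronecker]
  rw [hconj, AlgEquiv.spectrum_eq]

end Matrix

theorem Set.Finite.csSup_image_lt {α : Type*} {s : Set α} (hs : s.Finite) {f : α → ℝ} {c : ℝ}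
    (hc : 0 < c) (h : ∀ x ∈ s, f x < c) : sSup (f '' s) < c := by
  rcases s.eq_empty_or_nonempty with rfl | hne
  · simpa using hc
  · exact (hs.image f).csSup_lt_iff (hne.image f) |>.mpr <| Set.forall_mem_image.mpr h

theorem stmt15_general {N M : ℕ}
    (A : Matrix (Fin N) (Fin N) ℝ) (R : Matrix (Fin M) (Fin M) ℝ) (μ : ℝ)
    (hnn : ∀ i j, 0 ≤ A i j) (hcol : ∀ k, ∑ l, A l k = 1)
    (hR : R.IsHermitian)
    (hspec : ∀ r ∈ spectrum ℂ (R.map Complex.ofReal),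
      ‖(1 : ℂ) - 2 * (μ : ℂ) * r‖ < 1) :
    sSup ((fun z : ℂ => ‖z‖) '' spectrum ℂ
      ((Aᵀ ⊗ₖ ((1 : Matrix (Fin M) (Fin M) ℝ) - (2 * μ) • R)).map Complex.ofReal)) < 1 := by
  have hAT : Aᵀ ∈ rowStochastic ℝ (Fin N) :=
    mem_rowStochastic_iff_sum.mpr ⟨fun i j => hnn j i, hcol⟩
  have hRc : (R.map Complex.ofReal).IsHermitian :=
    hR.map _ fun _ => (Complex.conj_ofReal _).symm
  set c : Fin M → ℂ := fun k => 1 - 2 * μ * hRc.eigenvalues k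
  have hc : ∀ k, ‖c k‖ < 1 := fun k =>
    hspec _ (hRc.spectrum_eq_image_range ▸ ⟨_, ⟨k, rfl⟩, rfl⟩)
  have hB : (Aᵀ ⊗ₖ (1 - (2 * μ) • R)).map Complex.ofReal =
      Aᵀ.map Complex.ofReal ⊗ₖ
        Unitary.conjStarAlgAut ℂ _ hRc.eigenvectorUnitary (diagonal c) := by
    have hdiag : diagonal c = 1 - (2 * μ : ℂ) • diagonal (RCLike.ofReal ∘ hRc.eigenvalues) := by
      ext i j; by_cases h : i = j <;> simp [c, h, one_apply]
    rw [hdiag, map_sub, map_one, map_smul, ← hRc.spectral_theorem]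
    ext ⟨i, k⟩ ⟨j, l⟩
    by_cases h : k = l <;> simp [h, one_apply, mul_sub]
  refine (finite_spectrum _).csSup_image_lt one_pos fun z hz => ?_
  rw [hB, spectrum_kronecker_conjStarAlgAut] at hz
  obtain ⟨k, hk⟩ := exists_norm_le_of_mem_spectrum_kronecker_diagonal hAT c hz
  exact hk.trans_lt (hc k)

theorem stmt15 {N M : ℕ} (hN : 0 < N) (hM : 0 < M)
    (A : Matrix (Fin N) (Fin N) ℝ) (R : Matrix (Fin M) (Fin M) ℝ) (μ : ℝ)
    (hnn : ∀ i j, 0 ≤ A i j) (hcol : ∀ k, ∑ l, A l k = 1)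
    (hR : R.IsHermitian) (hRpd : R.PosDef) (hμ : 0 < μ)
    (hspec : ∀ r ∈ spectrum ℂ (R.map Complex.ofReal),
      ‖(1 : ℂ) - 2 * (μ : ℂ) * r‖ < 1) :
    sSup ((fun z : ℂ => ‖z‖) '' spectrum ℂ
      ((Aᵀ ⊗ₖ ((1 : Matrix (Fin M) (Fin M) ℝ) - (2 * μ) • R)).map Complex.ofReal)) < 1 :=
  stmt15_general A R μ hnn hcol hR hspec
end

section
/- There exist an N×N doubly-stochastic matrix A (for some N ≥ 2), a symmetric positive-definite matrix R, and a step-size μ > 0 such that ρ(I - 2μR) < 1 (each non-cooperative agent is mean-stable) but the matrix B_cons = Aᵀ⊗I_M - 2μ(I_N⊗R) has spectral radius at least 1. Concretely, for N = 2, A = [[0,1],[1,0]], M = 1, R = r > 0 with 0 < 2μr < 2: the eigenvalues of B_cons are ±1 - 2μr, and |-1 - 2μr| = 1 + 2μr > 1. -/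
open Matrix Kronecker

/-!
If `A *ᵥ v = a • v` and `R *ᵥ w = r • w`, then `v ⊗ w` is an eigenvector of
`A ⊗ I - c (I ⊗ R)` with eigenvalue `a - c r`. The swap matrix `[[0,1],[1,0]]` is doubly stochastic
and has the eigenvalue `-1` (eigenvector `(1,-1)`), so with `R = 1` and `μ = 1/4` the single agent
`1 - 2μR = 1/2` is stable while the consensus matrix has the eigenvalue `-1 - 2μ = -3/2`.
-/

namespace Matrix

variable {K L : Type*} {l m n p : Type*} [Fintype m] [Fintype p]

theorem kronecker_mulVec_kronecker [CommSemiring K] (A : Matrix l m K) (B : Matrix n p K)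
    (v : m → K) (w : p → K) :
    (A ⊗ₖ B) *ᵥ (fun q => v q.1 * w q.2) = fun q => (A *ᵥ v) q.1 * (B *ᵥ w) q.2 := by
  ext ⟨i, j⟩
  simp only [mulVec, dotProduct, kroneckerMap_apply, Fintype.sum_prod_type, Finset.sum_mul_sum]
  exact Finset.sum_congr rfl fun _ _ => Finset.sum_congr rfl fun _ _ => mul_mul_mul_comm _ _ _ _

theorem kronecker_one_sub_smul_one_kronecker_mulVec [CommRing K] [DecidableEq m] [DecidableEq p]
    {A : Matrix m m K} {R : Matrix p p K} {v : m → K} {w : p → K} {a r : K}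
    (hv : A *ᵥ v = a • v) (hw : R *ᵥ w = r • w) (c : K) :
    (A ⊗ₖ 1 - c • (1 ⊗ₖ R)) *ᵥ (fun q => v q.1 * w q.2) =
      (a - c * r) • fun q => v q.1 * w q.2 := by
  rw [sub_mulVec, smul_mulVec, kronecker_mulVec_kronecker, kronecker_mulVec_kronecker, hv, hw,
    one_mulVec, one_mulVec]
  ext q
  simp only [Pi.sub_apply, Pi.smul_apply, smul_eq_mul]
  ring

theorem mem_spectrum_of_mulVec_eq_smul [Field K] [DecidableEq m] {M : Matrix m m K} {v : m → K}
    {a : K} (hv : v ≠ 0) (h : M *ᵥ v = a • v) : a ∈ spectrum K M := by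
  rw [← spectrum_toLin']
  exact Module.End.HasEigenvalue.mem_spectrum <| Module.End.hasEigenvalue_of_hasEigenvector
    ⟨Module.End.mem_eigenspace_iff.2 (by simpa using h), hv⟩

theorem map_mem_spectrum_map_of_mulVec_eq_smul [Field K] [Field L] [DecidableEq m] (f : K →+* L)
    {M : Matrix m m K} {v : m → K} {a : K} (hv : v ≠ 0) (h : M *ᵥ v = a • v) :
    f a ∈ spectrum L (M.map f) := by
  refine mem_spectrum_of_mulVec_eq_smul (v := f ∘ v) ?_ ?_
  · exact fun h0 => hv <| funext fun i => f.injective <| by simpa using congrFun h0 i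
  · ext i
    simp [← RingHom.map_mulVec, h]

theorem spectrum_fin_one [Field K] (M : Matrix (Fin 1) (Fin 1) K) :
    spectrum K M = {M 0 0} := by
  have hM : algebraMap K _ (M 0 0) = M := by
    ext i j
    fin_cases i; fin_cases j; simp [algebraMap_matrix_apply]
  conv_lhs => rw [← hM]
  exact spectrum.scalar_eq _

end Matrix

theorem stmt16 :
    ∃ (A : Matrix (Fin 2) (Fin 2) ℝ) (R : Matrix (Fin 1) (Fin 1) ℝ) (μ : ℝ),
      (∀ i j, 0 ≤ A i j) ∧ (∀ k, ∑ l, A l k = 1) ∧ (∀ l, ∑ k, A l k = 1) ∧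
      R.IsHermitian ∧ R.PosDef ∧ 0 < μ ∧
      (∀ z ∈ spectrum ℂ (((1 : Matrix (Fin 1) (Fin 1) ℝ) - (2 * μ) • R).map Complex.ofReal),
        ‖z‖ < 1) ∧
      (∃ z ∈ spectrum ℂ
          ((Aᵀ ⊗ₖ (1 : Matrix (Fin 1) (Fin 1) ℝ)
            - (2 * μ) • ((1 : Matrix (Fin 2) (Fin 2) ℝ) ⊗ₖ R)).map Complex.ofReal),
        1 ≤ ‖z‖) := by
  refine ⟨!![0, 1; 1, 0], 1, 1 / 4, ?_, ?_, ?_, isHermitian_one, PosDef.one, by norm_num, ?_, ?_⟩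
  · intro i j; fin_cases i <;> fin_cases j <;> simp
  · intro k; fin_cases k <;> simp [Fin.sum_univ_two]
  · intro l; fin_cases l <;> simp [Fin.sum_univ_two]
  · intro z hz
    rw [spectrum_fin_one, Set.mem_singleton_iff] at hz
    norm_num [hz]
  · have hswap :
        (!![0, 1; 1, 0] : Matrix (Fin 2) (Fin 2) ℝ)ᵀ *ᵥ ![1, -1] = (-1 : ℝ) • ![1, -1] := by
      ext i; fin_cases i <;> simp
    have hR : (1 : Matrix (Fin 1) (Fin 1) ℝ) *ᵥ 1 = (1 : ℝ) • 1 := by simp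
    have hv : (fun q : Fin 2 × Fin 1 => (![1, -1] : Fin 2 → ℝ) q.1 * (1 : Fin 1 → ℝ) q.2) ≠ 0 :=
      fun h => by simpa using congrFun h (0, 0)
    refine ⟨_, map_mem_spectrum_map_of_mulVec_eq_smul Complex.ofRealHom hv
      (kronecker_one_sub_smul_one_kronecker_mulVec hswap hR _), ?_⟩
    norm_num
end
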